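/- arXiv:1811.10963 — 3 statements merged into one kernel-verified Lean document; each statement's English description precedes it below -/
import Mathlib

section
/- Let X and Y₁, …, Y_m be ℝ^p-valued random vectors on a probability space (Ω, μ) such that every component of X and of each Y_l has finite fourth moment. Then the cumulative generalized kurtosis matrix is orthogonally equivariant: for any p×p real orthogonal matrix V, G_m(V·X; V·Y₁, …, V·Y_m) = V · G_m(X; Y₁, …, Y_m) · Vᵀ. -/
open MeasureTheory Matrix

/-- Covariance of two real random variables: `Cov(U,V) = E[UV] - E[U] E[V]`. -/
noncomputable def cov {Ω : Type*} [MeasurableSpace Ω] (μ : Measure Ω) (U V : Ω → ℝ) : ℝ :=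
  (∫ ω, U ω * V ω ∂μ) - (∫ ω, U ω ∂μ) * (∫ ω, V ω ∂μ)

/-- The matrix `C_{ij}(X,Y)` with entries `Cov(X_a X_b, Y_i Y_j)`. -/
noncomputable def kurtCovMat {Ω : Type*} [MeasurableSpace Ω] (μ : Measure Ω) {p : ℕ}
    (X Y : Ω → Fin p → ℝ) (i j : Fin p) : Matrix (Fin p) (Fin p) ℝ :=
  Matrix.of fun a b => cov μ (fun ω => X ω a * X ω b) (fun ω => Y ω i * Y ω j)

/-- The generalized kurtosis matrix `g(X,Y) = ∑_i ∑_j C_{ij}(X,Y) C_{ij}(X,Y)ᵀ`. -/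
noncomputable def genKurt {Ω : Type*} [MeasurableSpace Ω] (μ : Measure Ω) {p : ℕ}
    (X Y : Ω → Fin p → ℝ) : Matrix (Fin p) (Fin p) ℝ :=
  ∑ i : Fin p, ∑ j : Fin p, kurtCovMat μ X Y i j * (kurtCovMat μ X Y i j)ᵀ

/-- The cumulative generalized kurtosis matrix `G_m(X; Y₁, …, Y_m) = ∑_l g(X, Y_l)`. -/
noncomputable def cumGenKurt {Ω : Type*} [MeasurableSpace Ω] (μ : Measure Ω) {p m : ℕ}
    (X : Ω → Fin p → ℝ) (Y : Fin m → Ω → Fin p → ℝ) : Matrix (Fin p) (Fin p) ℝ :=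
  ∑ l : Fin m, genKurt μ X (Y l)

/-!
Each entry of `C_{ij}(VX, VY)` is a covariance of quadratic forms in the coordinates of `X` and
`Y`, so bilinearity of the covariance gives
`C_{ij}(VX, VY) = V (∑_{k,l} (V ⊗ V)_{(i,j),(k,l)} C_{kl}(X, Y)) Vᵀ`.
Since `V ⊗ V` is orthogonal along with `V`, summing `C Cᵀ` over `(i, j)` collapses to
`V (∑_{k,l} C_{kl} C_{kl}ᵀ) Vᵀ`.
-/

open ProbabilityTheory
open scoped Kronecker

section Covariance

variable {Ω : Type*} [MeasurableSpace Ω] {μ : Measure Ω}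

lemma memLp_two_mul_of_memLp_four {f g : Ω → ℝ} (hf : MemLp f 4 μ) (hg : MemLp g 4 μ) :
    MemLp (fun ω => f ω * g ω) 2 μ :=
  have : ENNReal.HolderTriple 4 4 2 := ⟨by
    rw [← two_mul, show (4 : ENNReal) = 2 * 2 by norm_num, ENNReal.mul_inv (by simp) (by simp),
      ← mul_assoc, ENNReal.mul_inv_cancel (by simp) (by simp), one_mul]⟩
  hg.mul' hf

variable [IsProbabilityMeasure μ]

lemma cov_eq_covariance {U W : Ω → ℝ} (hU : MemLp U 2 μ) (hW : MemLp W 2 μ) :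
    cov μ U W = covariance U W μ :=
  (covariance_eq_sub hU hW).symm

lemma cov_sum_mul_sum {ι κ : Type*} [Fintype ι] [Fintype κ] {U : ι → Ω → ℝ}
    {W : κ → Ω → ℝ} (hU : ∀ i, MemLp (U i) 2 μ) (hW : ∀ k, MemLp (W k) 2 μ)
    (α : ι → ℝ) (β : κ → ℝ) :
    cov μ (fun ω => ∑ i, α i * U i ω) (fun ω => ∑ k, β k * W k ω)
      = ∑ i, ∑ k, α i * β k * cov μ (U i) (W k) := by
  have hαU : ∀ i, MemLp (fun ω => α i * U i ω) 2 μ := fun i => (hU i).const_mul _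
  have hβW : ∀ k, MemLp (fun ω => β k * W k ω) 2 μ := fun k => (hW k).const_mul _
  rw [cov_eq_covariance (memLp_finsetSum _ fun i _ => hαU i)
    (memLp_finsetSum _ fun k _ => hβW k), covariance_fun_sum_fun_sum hαU hβW]
  simp only [covariance_const_mul_left, covariance_const_mul_right,
    cov_eq_covariance (hU _) (hW _), mul_assoc, mul_left_comm (β _)]

end Covariance

section MatrixAlgebra

variable {ι κ R : Type*} [CommSemiring R]

lemma mulVec_apply_mul_mulVec_apply [Fintype κ] (V : Matrix ι κ R) (x : κ → R) (a b : ι) :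
    (V *ᵥ x) a * (V *ᵥ x) b = ∑ kl : κ × κ, (V ⊗ₖ V) (a, b) kl * (x kl.1 * x kl.2) := by
  simp only [mulVec, dotProduct, Finset.sum_mul_sum, Fintype.sum_prod_type, kronecker_apply]
  exact Finset.sum_congr rfl fun _ _ => Finset.sum_congr rfl fun _ _ => by ring

lemma mul_mul_transpose_apply [Fintype κ] (V : Matrix ι κ R) (M : Matrix κ κ R) (a b : ι) :
    (V * M * Vᵀ) a b = ∑ kl : κ × κ, (V ⊗ₖ V) (a, b) kl * M kl.1 kl.2 := by
  simp only [mul_apply, transpose_apply, Finset.sum_mul, Fintype.sum_prod_type, kronecker_apply]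
  rw [Finset.sum_comm]
  exact Finset.sum_congr rfl fun _ _ => Finset.sum_congr rfl fun _ _ => by ring

lemma mul_mul_transpose_mul_transpose [Fintype ι] [Fintype κ] [DecidableEq κ] {V : Matrix ι κ R}
    (hV : Vᵀ * V = 1) (M : Matrix κ κ R) :
    V * M * Vᵀ * (V * M * Vᵀ)ᵀ = V * (M * Mᵀ) * Vᵀ := by
  simp only [transpose_mul, transpose_transpose, Matrix.mul_assoc]
  rw [← Matrix.mul_assoc Vᵀ V, hV, Matrix.one_mul]

lemma kronecker_transpose_mul_self {V : Matrix ι κ R} [Fintype ι] [DecidableEq κ]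
    (hV : Vᵀ * V = 1) : (V ⊗ₖ V)ᵀ * (V ⊗ₖ V) = 1 := by
  rw [← kroneckerMap_transpose, ← mul_kronecker_mul, hV, one_kronecker_one]

lemma sum_smul_mul_sum_smul_of_transpose_mul_self {A : Type*} [Semiring A] [Algebra R A]
    [Fintype ι] [Fintype κ] [DecidableEq κ] {W : Matrix ι κ R} (hW : Wᵀ * W = 1) (a b : κ → A) :
    ∑ i, (∑ k, W i k • a k) * (∑ k, W i k • b k) = ∑ k, a k * b k := by
  have hWW : ∀ k k', ∑ i, W i k * W i k' = if k = k' then 1 else 0 := fun k k' => by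
    simpa [mul_apply, one_apply] using congrFun (congrFun hW k) k'
  simp_rw [Finset.sum_mul_sum, smul_mul_smul_comm]
  rw [Finset.sum_comm]
  refine Finset.sum_congr rfl fun k _ => ?_
  rw [Finset.sum_comm]
  simp_rw [← Finset.sum_smul, hWW, ite_smul, one_smul, zero_smul, Finset.sum_ite_eq,
    Finset.mem_univ, if_true]

end MatrixAlgebra

section Kurtosis

variable {Ω : Type*} [MeasurableSpace Ω] {μ : Measure Ω} [IsProbabilityMeasure μ] {p : ℕ}
  {X Y : Ω → Fin p → ℝ}

lemma kurtCovMat_mulVec (hX4 : ∀ i, MemLp (fun ω => X ω i) 4 μ)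
    (hY4 : ∀ i, MemLp (fun ω => Y ω i) 4 μ) (V : Matrix (Fin p) (Fin p) ℝ) (i j : Fin p) :
    kurtCovMat μ (fun ω => V *ᵥ X ω) (fun ω => V *ᵥ Y ω) i j
      = V * (∑ kl : Fin p × Fin p, (V ⊗ₖ V) (i, j) kl • kurtCovMat μ X Y kl.1 kl.2) * Vᵀ := by
  ext a b
  simp only [kurtCovMat, of_apply, mulVec_apply_mul_mulVec_apply]
  refine (cov_sum_mul_sum
    (fun cd : Fin p × Fin p => memLp_two_mul_of_memLp_four (hX4 cd.1) (hX4 cd.2))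
    (fun kl : Fin p × Fin p => memLp_two_mul_of_memLp_four (hY4 kl.1) (hY4 kl.2)) _ _).trans ?_
  rw [mul_mul_transpose_apply]
  simp only [Matrix.sum_apply, Matrix.smul_apply, of_apply, smul_eq_mul, Finset.mul_sum]
  exact Finset.sum_congr rfl fun _ _ => Finset.sum_congr rfl fun _ _ => by ring

lemma genKurt_mulVec (hX4 : ∀ i, MemLp (fun ω => X ω i) 4 μ)
    (hY4 : ∀ i, MemLp (fun ω => Y ω i) 4 μ) {V : Matrix (Fin p) (Fin p) ℝ}
    (hV : Vᵀ * V = 1) :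
    genKurt μ (fun ω => V *ᵥ X ω) (fun ω => V *ᵥ Y ω) = V * genKurt μ X Y * Vᵀ := by
  simp only [genKurt, kurtCovMat_mulVec hX4 hY4, mul_mul_transpose_mul_transpose hV,
    ← Matrix.mul_sum, ← Matrix.sum_mul, ← Fintype.sum_prod_type', transpose_sum,
    transpose_smul]
  rw [sum_smul_mul_sum_smul_of_transpose_mul_self (kronecker_transpose_mul_self hV)]

end Kurtosis

theorem cumGenKurt_orthogonal_equivariant_general {Ω : Type*} [MeasurableSpace Ω]
    (μ : Measure Ω) [IsProbabilityMeasure μ] {p m : ℕ}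
    (X : Ω → Fin p → ℝ) (Y : Fin m → Ω → Fin p → ℝ)
    (hX4 : ∀ i, MemLp (fun ω => X ω i) 4 μ)
    (hY4 : ∀ l i, MemLp (fun ω => Y l ω i) 4 μ)
    (V : Matrix (Fin p) (Fin p) ℝ) (hV : Vᵀ * V = 1) :
    cumGenKurt μ (fun ω => V.mulVec (X ω)) (fun l ω => V.mulVec (Y l ω)) =
      V * cumGenKurt μ X Y * Vᵀ := by
  simp only [cumGenKurt, genKurt_mulVec hX4 (hY4 _) hV, ← Matrix.mul_sum, ← Matrix.sum_mul]

/-- Orthogonal equivariance of the cumulative generalized kurtosis matrix: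
`G_m(V X; V Y₁, …, V Y_m) = V G_m(X; Y₁, …, Y_m) Vᵀ` for orthogonal `V`. -/
theorem cumGenKurt_orthogonal_equivariant {Ω : Type*} [MeasurableSpace Ω]
    (μ : Measure Ω) [IsProbabilityMeasure μ] {p m : ℕ}
    (X : Ω → Fin p → ℝ) (Y : Fin m → Ω → Fin p → ℝ)
    (hXmeas : Measurable X) (hYmeas : ∀ l, Measurable (Y l))
    (hX4 : ∀ i, MemLp (fun ω => X ω i) 4 μ)
    (hY4 : ∀ l i, MemLp (fun ω => Y l ω i) 4 μ)
    (V : Matrix (Fin p) (Fin p) ℝ) (hV : Vᵀ * V = 1) (hV' : V * Vᵀ = 1) :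
    cumGenKurt μ (fun ω => V.mulVec (X ω)) (fun l ω => V.mulVec (Y l ω)) =
      V * cumGenKurt μ X Y * Vᵀ :=
  cumGenKurt_orthogonal_equivariant_general μ X Y hX4 hY4 V hV
end

section
/- Let X and Y₁, …, Y_m be ℝ^p-valued random vectors on a probability space (Ω, μ) such that every component has finite fourth moment and mean zero, i.e. E[X_i] = 0 and E[(Y_l)_i] = 0 for all i and l. Assume the p random vectors W_i = (X_i, (Y₁)_i, …, (Y_m)_i) ∈ ℝ^{m+1}, for i = 1, …, p, are mutually independent. Then the cumulative generalized kurtosis matrix G_m(X; Y₁, …, Y_m) is a diagonal matrix. -/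
open MeasureTheory Matrix ProbabilityTheory

/-! The entry `Cov(X_a X_c, Y_i Y_j)` vanishes unless `{i, j} = {a, c}`: either the pairs
`{a, c}` and `{i, j}` are disjoint, and independence factors `E[X_a X_c Y_i Y_j]`, or some index
occurs exactly once among `a, c, i, j`, and independence splits a centred factor off both terms
of the covariance. Hence a nonzero term of `∑_c C_{ij}(a, c) C_{ij}(b, c)` needs
`{a, c} = {i, j} = {b, c}`, which forces `a = b`. -/

theorem Matrix.isDiag_sum {ι n α : Type*} [AddCommMonoid α] (s : Finset ι)
    {A : ι → Matrix n n α} (h : ∀ l ∈ s, (A l).IsDiag) : (∑ l ∈ s, A l).IsDiag := by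
  intro a b hab
  rw [Matrix.sum_apply]
  exact Finset.sum_eq_zero fun l hl => h l hl hab

theorem genKurt_isDiag {Ω : Type*} [MeasurableSpace Ω] {μ : Measure Ω} {p : ℕ}
    {X Y : Ω → Fin p → ℝ}
    (h : ∀ i j a c, kurtCovMat μ X Y i j a c ≠ 0 → (i = a ∧ j = c) ∨ (i = c ∧ j = a)) :
    (genKurt μ X Y).IsDiag := by
  intro a b hab
  simp only [genKurt, Matrix.sum_apply, Matrix.mul_apply, Matrix.transpose_apply]
  refine Finset.sum_eq_zero fun i _ => Finset.sum_eq_zero fun j _ =>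
    Finset.sum_eq_zero fun c _ => ?_
  by_contra hne
  obtain ⟨ha, hb⟩ := mul_ne_zero_iff.mp hne
  have hac := h i j a c ha
  have hbc := h i j b c hb
  grind

namespace ProbabilityTheory.iIndepFun

variable {Ω ι β : Type*} [MeasurableSpace Ω] [MeasurableSpace β] {μ : Measure Ω}
  {W : ι → Ω → β}

theorem integral_comp_mul_comp (hind : iIndepFun W μ) (hW : ∀ k, Measurable (W k)) {s t : ι}
    (hst : s ≠ t) {φ ψ : β → ℝ} (hφ : Measurable φ) (hψ : Measurable ψ) :
    ∫ ω, φ (W s ω) * ψ (W t ω) ∂μ = (∫ ω, φ (W s ω) ∂μ) * ∫ ω, ψ (W t ω) ∂μ :=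
  ((hind.indepFun hst).comp hφ hψ).integral_mul_eq_mul_integral
    (hφ.comp (hW s)).aestronglyMeasurable (hψ.comp (hW t)).aestronglyMeasurable

theorem integral_comp₂_mul_comp (hind : iIndepFun W μ) (hW : ∀ k, Measurable (W k))
    {s t u : ι} (hsu : s ≠ u) (htu : t ≠ u) {φ : β × β → ℝ} {ψ : β → ℝ}
    (hφ : Measurable φ) (hψ : Measurable ψ) :
    ∫ ω, φ (W s ω, W t ω) * ψ (W u ω) ∂μ
      = (∫ ω, φ (W s ω, W t ω) ∂μ) * ∫ ω, ψ (W u ω) ∂μ :=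
  ((hind.indepFun_prodMk hW s t u hsu htu).comp hφ hψ).integral_mul_eq_mul_integral
    (hφ.comp ((hW s).prodMk (hW t))).aestronglyMeasurable
    (hψ.comp (hW u)).aestronglyMeasurable

theorem integral_comp₂_mul_comp₂ (hind : iIndepFun W μ) (hW : ∀ k, Measurable (W k))
    {s t u v : ι} (hsu : s ≠ u) (hsv : s ≠ v) (htu : t ≠ u) (htv : t ≠ v)
    {φ ψ : β × β → ℝ} (hφ : Measurable φ) (hψ : Measurable ψ) :
    ∫ ω, φ (W s ω, W t ω) * ψ (W u ω, W v ω) ∂μ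
      = (∫ ω, φ (W s ω, W t ω) ∂μ) * ∫ ω, ψ (W u ω, W v ω) ∂μ :=
  ((hind.indepFun_prodMk_prodMk hW s t u v hsu hsv htu htv).comp hφ
    hψ).integral_mul_eq_mul_integral
    (hφ.comp ((hW s).prodMk (hW t))).aestronglyMeasurable
    (hψ.comp ((hW u).prodMk (hW v))).aestronglyMeasurable

variable {u v : β → ℝ}

theorem cov_mul_mul_eq_zero_of_left_eq (hind : iIndepFun W μ) (hW : ∀ k, Measurable (W k))
    (hu : Measurable u) (hv : Measurable v) (hu0 : ∀ k, ∫ ω, u (W k ω) ∂μ = 0)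
    (hv0 : ∀ k, ∫ ω, v (W k ω) ∂μ = 0) {a c j : ι} (hcj : c ≠ j) :
    cov μ (fun ω => u (W a ω) * u (W c ω)) (fun ω => v (W a ω) * v (W j ω)) = 0 := by
  unfold cov
  by_cases hja : j = a
  · -- `c` occurs once
    subst j
    have hXX : ∫ ω, u (W a ω) * u (W c ω) ∂μ = 0 := by
      rw [hind.integral_comp_mul_comp hW hcj.symm hu hu, hu0 c, mul_zero]
    have hXXYY : ∫ ω, u (W a ω) * u (W c ω) * (v (W a ω) * v (W a ω)) ∂μ = 0 :=
      calc _ = ∫ ω, u (W a ω) * v (W a ω) * v (W a ω) * u (W c ω) ∂μ := by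
              congr 1; ext ω; ring
        _ = 0 := by
          rw [hind.integral_comp_mul_comp hW hcj.symm (φ := fun w => u w * v w * v w)
            (by fun_prop) hu, hu0 c, mul_zero]
    rw [hXX, hXXYY, zero_mul, sub_zero]
  · -- `j` occurs once
    have hYY : ∫ ω, v (W a ω) * v (W j ω) ∂μ = 0 := by
      rw [hind.integral_comp_mul_comp hW (Ne.symm hja) hv hv, hv0 j, mul_zero]
    have hXXYY : ∫ ω, u (W a ω) * u (W c ω) * (v (W a ω) * v (W j ω)) ∂μ = 0 :=
      calc _ = ∫ ω, u (W a ω) * u (W c ω) * v (W a ω) * v (W j ω) ∂μ := by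
              congr 1; ext ω; ring
        _ = 0 := by
          rw [hind.integral_comp₂_mul_comp hW (Ne.symm hja) hcj
            (φ := fun w => u w.1 * u w.2 * v w.1) (by fun_prop) hv, hv0 j, mul_zero]
    rw [hYY, hXXYY, mul_zero, sub_zero]

theorem cov_mul_mul_eq_zero (hind : iIndepFun W μ) (hW : ∀ k, Measurable (W k))
    (hu : Measurable u) (hv : Measurable v) (hu0 : ∀ k, ∫ ω, u (W k ω) ∂μ = 0)
    (hv0 : ∀ k, ∫ ω, v (W k ω) ∂μ = 0) {a c i j : ι}
    (h : ¬((i = a ∧ j = c) ∨ (i = c ∧ j = a))) :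
    cov μ (fun ω => u (W a ω) * u (W c ω)) (fun ω => v (W i ω) * v (W j ω)) = 0 := by
  have of_mem : ∀ {i j}, (i = a ∨ i = c) → ¬((i = a ∧ j = c) ∨ (i = c ∧ j = a)) →
      cov μ (fun ω => u (W a ω) * u (W c ω)) (fun ω => v (W i ω) * v (W j ω)) = 0 := by
    rintro i j (rfl | rfl) h
    · exact cov_mul_mul_eq_zero_of_left_eq hind hW hu hv hu0 hv0 fun hcj =>
        h (Or.inl ⟨rfl, hcj.symm⟩)
    · simp_rw [mul_comm (u (W a _))]
      exact cov_mul_mul_eq_zero_of_left_eq hind hW hu hv hu0 hv0 fun haj =>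
        h (Or.inr ⟨rfl, haj.symm⟩)
  by_cases hi : i = a ∨ i = c
  · exact of_mem hi h
  by_cases hj : j = a ∨ j = c
  · simp_rw [mul_comm (v (W i _))]
    exact of_mem hj (by tauto)
  rw [not_or] at hi hj
  exact sub_eq_zero.mpr (hind.integral_comp₂_mul_comp₂ hW (Ne.symm hi.1) (Ne.symm hj.1)
    (Ne.symm hi.2) (Ne.symm hj.2) (φ := fun w => u w.1 * u w.2) (ψ := fun w => v w.1 * v w.2)
    (by fun_prop) (by fun_prop))

end ProbabilityTheory.iIndepFun

theorem cumGenKurt_isDiag_of_indep_general {Ω : Type*} [MeasurableSpace Ω]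
    (μ : Measure Ω) {p m : ℕ}
    (X : Ω → Fin p → ℝ) (Y : Fin m → Ω → Fin p → ℝ)
    (hXmeas : Measurable X) (hYmeas : ∀ l, Measurable (Y l))
    (hX0 : ∀ i, (∫ ω, X ω i ∂μ) = 0)
    (hY0 : ∀ l i, (∫ ω, Y l ω i ∂μ) = 0)
    (hindep : iIndepFun
      (fun i ω => (Fin.cons (X ω i) (fun l => Y l ω i) : Fin (m + 1) → ℝ)) μ) :
    (cumGenKurt μ X Y).IsDiag := by
  have hW : ∀ k, Measurable fun ω => (Fin.cons (X ω k) (fun l => Y l ω k) : Fin (m + 1) → ℝ) :=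
    fun k => measurable_pi_iff.mpr fun r =>
      Fin.cases (by simpa using hXmeas.eval) (fun l => by simpa using (hYmeas l).eval) r
  refine Matrix.isDiag_sum _ fun l _ => genKurt_isDiag fun i j a c hne => ?_
  rw [kurtCovMat, Matrix.of_apply] at hne
  by_contra h
  exact hne (hindep.cov_mul_mul_eq_zero hW (u := fun w => w 0) (v := fun w => w l.succ)
    (measurable_pi_apply _) (measurable_pi_apply _) hX0 (hY0 l) h)

/-- Independence property of the cumulative generalized kurtosis matrix: if the component
vectors `W_i = (X_i, (Y₁)_i, …, (Y_m)_i)` are mutually independent and all components are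
centered with finite fourth moments, then `G_m(X; Y₁, …, Y_m)` is diagonal. -/
theorem cumGenKurt_isDiag_of_indep {Ω : Type*} [MeasurableSpace Ω]
    (μ : Measure Ω) [IsProbabilityMeasure μ] {p m : ℕ}
    (X : Ω → Fin p → ℝ) (Y : Fin m → Ω → Fin p → ℝ)
    (hXmeas : Measurable X) (hYmeas : ∀ l, Measurable (Y l))
    (hX4 : ∀ i, MemLp (fun ω => X ω i) 4 μ)
    (hY4 : ∀ l i, MemLp (fun ω => Y l ω i) 4 μ)
    (hX0 : ∀ i, (∫ ω, X ω i ∂μ) = 0)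
    (hY0 : ∀ l i, (∫ ω, Y l ω i ∂μ) = 0)
    (hindep : iIndepFun
      (fun i ω => (Fin.cons (X ω i) (fun l => Y l ω i) : Fin (m + 1) → ℝ)) μ) :
    (cumGenKurt μ X Y).IsDiag :=
  cumGenKurt_isDiag_of_indep_general μ X Y hXmeas hYmeas hX0 hY0 hindep
end

section
/- Consider a stationary GARCH(1,1) step with Gaussian innovations: let ω > 0 and α, β ≥ 0, and let σ₀, ε₀, z₀, σ₁, ε₁, z₁ be real random variables on a probability space (Ω, μ) such that: σ₀ ≥ 0 and σ₁ ≥ 0; ε₀ and ε₁ are standard Gaussian N(0,1); ε₀ is independent of σ₀ and z₀ = σ₀ ε₀; ε₁ is independent of the pair (σ₀, z₀); σ₁² = ω + α z₀² + β σ₀² and z₁ = σ₁ ε₁; the pair (z₁, σ₁) has the same joint distribution as (z₀, σ₀) (stationarity); E[σ₀²] = 1; and E[σ₀⁴] < ∞. Then 3α² + 2αβ + β² < 1 and the stationary fourth moment of the process is E[z₀⁴] = 3(ω² + 2ω(α + β)) / (1 − 3α² − 2αβ − β²). -/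
/-!
With `U = α ε₀² + β`, the recursion reads `σ₁² = w + σ₀² U`, where `U` is independent of `σ₀`
with `E U = α + β` and `E U² = 3α² + 2αβ + β²` (the Gaussian moments `E ε² = 1`, `E ε⁴ = 3`).
Squaring and integrating gives `E σ₁⁴ = w² + 2w(α + β) E σ₀² + (3α² + 2αβ + β²) E σ₀⁴`, and
stationarity turns this into `(1 - 3α² - 2αβ - β²) E σ₀⁴ = w² + 2w(α + β) > 0`. Since
`E σ₀⁴ ≥ 0`, the coefficient is positive, and `E z₀⁴ = E σ₀⁴ E ε₀⁴ = 3 E σ₀⁴`.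
-/

open MeasureTheory ProbabilityTheory Real
open scoped NNReal ENNReal Nat

namespace ProbabilityTheory

lemma integral_even_pow_mul_exp_neg_sq_div_two (k : ℕ) :
    ∫ x : ℝ, x ^ (2 * k) * rexp (-x ^ 2 / 2) = √(2 * π) * (2 * k - 1 : ℕ)‼ := by
  have hpow : (1 / 2 : ℝ) ^ (-(2 * k + 1 : ℝ) / 2) = 2 ^ k * √2 := by
    rw [one_div, inv_rpow zero_le_two, ← rpow_neg zero_le_two, neg_div, neg_neg,
      add_div, mul_div_cancel_left₀ _ two_ne_zero, rpow_add two_pos, rpow_natCast,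
      sqrt_eq_rpow]
  have hGamma : Gamma ((2 * k + 1 : ℝ) / 2) = (2 * k - 1 : ℕ)‼ * √π / 2 ^ k := by
    rw [← Gamma_nat_add_half]; ring_nf
  calc ∫ x : ℝ, x ^ (2 * k) * rexp (-x ^ 2 / 2)
      = ∫ x : ℝ, (fun t : ℝ => t ^ (2 * k) * rexp (-(1 / 2) * t ^ 2)) |x| := by
        simp only [pow_mul, sq_abs]; ring_nf
    _ = 2 * ∫ x in Set.Ioi (0 : ℝ), x ^ ((2 * k : ℕ) : ℝ) * rexp (-(1 / 2) * x ^ (2 : ℝ)) := by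
        rw [integral_comp_abs (f := fun t : ℝ => t ^ (2 * k) * rexp (-(1 / 2) * t ^ 2))]
        simp only [rpow_natCast, rpow_two]
    _ = √(2 * π) * (2 * k - 1 : ℕ)‼ := by
        rw [integral_rpow_mul_exp_neg_mul_rpow two_pos
          (neg_one_lt_zero.trans_le (Nat.cast_nonneg _)) one_half_pos]
        push_cast
        rw [hpow, hGamma, sqrt_mul zero_le_two]
        field_simp

lemma integral_even_pow_gaussianReal_zero_one (k : ℕ) :
    ∫ x, x ^ (2 * k) ∂gaussianReal 0 1 = (2 * k - 1 : ℕ)‼ := by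
  rw [integral_gaussianReal_eq_integral_smul one_ne_zero]
  simp only [gaussianPDFReal_def, NNReal.coe_one, mul_one, sub_zero, smul_eq_mul]
  simp_rw [mul_comm _ (_ ^ (2 * k)), mul_left_comm _ (_⁻¹), integral_const_mul,
    integral_even_pow_mul_exp_neg_sq_div_two]
  field_simp

lemma integral_even_pow_gaussianReal (v : ℝ≥0) (k : ℕ) :
    ∫ x, x ^ (2 * k) ∂gaussianReal 0 v = v ^ k * (2 * k - 1 : ℕ)‼ := by
  have hmap : (gaussianReal 0 1).map (√v * ·) = gaussianReal 0 v := by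
    rw [gaussianReal_map_const_mul, mul_zero, mul_one]
    congr
    simp
  rw [← hmap, integral_map (by fun_prop) (by fun_prop)]
  simp_rw [mul_pow, pow_mul, Real.sq_sqrt v.coe_nonneg, ← pow_mul]
  rw [integral_const_mul, integral_even_pow_gaussianReal_zero_one]

lemma integrable_pow_gaussianReal (m : ℝ) (v : ℝ≥0) (n : ℕ) :
    Integrable (fun x => x ^ n) (gaussianReal m v) :=
  integrable_pow_of_mem_interior_integrableExpSet (by simp) n

lemma memLp_mul_sq_add_const_gaussianReal (m : ℝ) (v : ℝ≥0) (a b : ℝ) :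
    MemLp (fun x => a * x ^ 2 + b) 2 (gaussianReal m v) := by
  have hsq : MemLp (fun x : ℝ => x ^ 2) 2 (gaussianReal m v) :=
    (memLp_two_iff_integrable_sq (by fun_prop)).2
      (by simpa only [← pow_mul] using integrable_pow_gaussianReal m v 4)
  exact (hsq.const_mul a).add (memLp_const b)

lemma integral_mul_sq_add_const_gaussianReal (v : ℝ≥0) (a b : ℝ) :
    ∫ x, a * x ^ 2 + b ∂gaussianReal 0 v = a * v + b := by
  rw [integral_add ((integrable_pow_gaussianReal 0 v 2).const_mul a) (integrable_const b),
    integral_const_mul, integral_const, integral_even_pow_gaussianReal v 1]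
  simp

lemma integral_mul_sq_add_const_sq_gaussianReal (v : ℝ≥0) (a b : ℝ) :
    ∫ x, (a * x ^ 2 + b) ^ 2 ∂gaussianReal 0 v = 3 * a ^ 2 * v ^ 2 + 2 * a * b * v + b ^ 2 := by
  have hexpand : ∀ x : ℝ,
      (a * x ^ 2 + b) ^ 2 = a ^ 2 * x ^ (2 * 2) + (2 * a * b * x ^ (2 * 1) + b ^ 2) :=
    fun x => by ring
  simp_rw [hexpand]
  rw [integral_add ((integrable_pow_gaussianReal 0 v _).const_mul _)
      (((integrable_pow_gaussianReal 0 v _).const_mul _).fun_add (integrable_const _)),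
    integral_add ((integrable_pow_gaussianReal 0 v _).const_mul _) (integrable_const _),
    integral_const_mul, integral_const_mul, integral_const, integral_even_pow_gaussianReal,
    integral_even_pow_gaussianReal]
  norm_num
  ring

section

variable {Ω : Type*} [MeasurableSpace Ω] {μ : Measure Ω}

lemma HasLaw.memLp_comp {𝓧 E : Type*} [MeasurableSpace 𝓧] [NormedAddCommGroup E]
    {ν : Measure 𝓧} {X : Ω → 𝓧} {f : 𝓧 → E} {p : ℝ≥0∞} (hX : HasLaw X ν μ) (hf : MemLp f p ν) :
    MemLp (f ∘ X) p μ :=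
  (hX.map_eq ▸ hf).comp_of_map hX.aemeasurable

lemma HasLaw.integral_mul_even_pow_gaussianReal {v : ℝ≥0} {ε σ : Ω → ℝ}
    (hε : HasLaw ε (gaussianReal 0 v) μ) (hεσ : IndepFun ε σ μ) (k : ℕ)
    (hσ : AEStronglyMeasurable (fun ω => σ ω ^ (2 * k)) μ) :
    ∫ ω, (σ ω * ε ω) ^ (2 * k) ∂μ = v ^ k * (2 * k - 1 : ℕ)‼ * ∫ ω, σ ω ^ (2 * k) ∂μ := by
  have hindep : IndepFun (fun ω => σ ω ^ (2 * k)) (fun ω => ε ω ^ (2 * k)) μ :=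
    hεσ.symm.comp (measurable_id.pow_const (2 * k)) (measurable_id.pow_const (2 * k))
  simp_rw [mul_pow]
  rw [hindep.integral_fun_mul_eq_mul_integral hσ (hε.aemeasurable.pow_const _).aestronglyMeasurable,
    ← integral_even_pow_gaussianReal v k, ← hε.integral_comp (by fun_prop)]
  simp only [Function.comp_def]
  ring

variable [IsProbabilityMeasure μ]

lemma IndepFun.integral_const_add_mul_sq {Y U : Ω → ℝ} (hYU : IndepFun Y U μ)
    (hY : MemLp Y 2 μ) (hU : MemLp U 2 μ) (c : ℝ) :
    ∫ ω, (c + Y ω * U ω) ^ 2 ∂μ = c ^ 2 + 2 * c * (∫ ω, Y ω ∂μ) * (∫ ω, U ω ∂μ)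
      + (∫ ω, Y ω ^ 2 ∂μ) * ∫ ω, U ω ^ 2 ∂μ := by
  have hYU2 : IndepFun (fun ω => Y ω ^ 2) (fun ω => U ω ^ 2) μ :=
    hYU.comp (measurable_id.pow_const 2) (measurable_id.pow_const 2)
  have hYUint : Integrable (fun ω => Y ω * U ω) μ :=
    hYU.integrable_mul (hY.integrable one_le_two) (hU.integrable one_le_two)
  have hYU2int : Integrable (fun ω => Y ω ^ 2 * U ω ^ 2) μ :=
    hYU2.integrable_mul hY.integrable_sq hU.integrable_sq
  calc ∫ ω, (c + Y ω * U ω) ^ 2 ∂μ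
      = ∫ ω, c ^ 2 + (2 * c * (Y ω * U ω) + Y ω ^ 2 * U ω ^ 2) ∂μ := by
        congr with ω; ring
    _ = c ^ 2 + (2 * c * ∫ ω, Y ω * U ω ∂μ) + ∫ ω, Y ω ^ 2 * U ω ^ 2 ∂μ := by
        rw [integral_add (integrable_const _) ((hYUint.const_mul _).fun_add hYU2int),
          integral_add (hYUint.const_mul _) hYU2int, integral_const, integral_const_mul]
        simp [add_assoc]
    _ = _ := by
        rw [hYU.integral_fun_mul_eq_mul_integral hY.1 hU.1,
          hYU2.integral_fun_mul_eq_mul_integral hY.integrable_sq.1 hU.integrable_sq.1]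
        ring

lemma integral_garch_variance_sq {ε σ : Ω → ℝ} (hε : HasLaw ε (gaussianReal 0 1) μ)
    (hεσ : IndepFun ε σ μ) (hσ : MemLp (fun ω => σ ω ^ 2) 2 μ) (w α β : ℝ) :
    ∫ ω, (w + α * (σ ω * ε ω) ^ 2 + β * σ ω ^ 2) ^ 2 ∂μ
      = w ^ 2 + 2 * w * (α + β) * (∫ ω, σ ω ^ 2 ∂μ)
        + (3 * α ^ 2 + 2 * α * β + β ^ 2) * ∫ ω, σ ω ^ 4 ∂μ := by
  have hU : MemLp (fun ω => α * ε ω ^ 2 + β) 2 μ :=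
    hε.memLp_comp (memLp_mul_sq_add_const_gaussianReal 0 1 α β)
  have hindep : IndepFun (fun ω => σ ω ^ 2) (fun ω => α * ε ω ^ 2 + β) μ :=
    hεσ.symm.comp (measurable_id.pow_const 2)
      (((measurable_id.pow_const 2).const_mul α).add_const β)
  have hUmean : ∫ ω, α * ε ω ^ 2 + β ∂μ = α + β := by
    simpa using (hε.integral_comp (f := fun x => α * x ^ 2 + β) (by fun_prop)).trans
      (integral_mul_sq_add_const_gaussianReal 1 α β)
  have hUsq : ∫ ω, (α * ε ω ^ 2 + β) ^ 2 ∂μ = 3 * α ^ 2 + 2 * α * β + β ^ 2 := by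
    simpa using (hε.integral_comp (f := fun x => (α * x ^ 2 + β) ^ 2) (by fun_prop)).trans
      (integral_mul_sq_add_const_sq_gaussianReal 1 α β)
  calc ∫ ω, (w + α * (σ ω * ε ω) ^ 2 + β * σ ω ^ 2) ^ 2 ∂μ
      = ∫ ω, (w + σ ω ^ 2 * (α * ε ω ^ 2 + β)) ^ 2 ∂μ := by
        congr with ω; ring
    _ = _ := by
        rw [hindep.integral_const_add_mul_sq hσ hU, hUmean, hUsq]
        simp only [← pow_mul]
        ring

end

end ProbabilityTheory

theorem garch_fourth_moment_general {Ω : Type*} [MeasurableSpace Ω]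
    (μ : Measure Ω) [IsProbabilityMeasure μ]
    (w α β : ℝ) (hw : 0 < w) (hα : 0 ≤ α) (hβ : 0 ≤ β)
    (σ₀ ε₀ z₀ σ₁ z₁ : Ω → ℝ)
    (hε₀law : Measure.map ε₀ μ = gaussianReal 0 1)
    (hindep₀ : IndepFun ε₀ σ₀ μ)
    (hz₀ : z₀ = fun ω => σ₀ ω * ε₀ ω)
    (hσ₁ : ∀ ω, σ₁ ω ^ 2 = w + α * z₀ ω ^ 2 + β * σ₀ ω ^ 2)
    (hstat : IdentDistrib (fun ω => (z₁ ω, σ₁ ω)) (fun ω => (z₀ ω, σ₀ ω)) μ μ)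
    (hvar : (∫ ω, σ₀ ω ^ 2 ∂μ) = 1)
    (hmom4 : Integrable (fun ω => σ₀ ω ^ 4) μ) :
    3 * α ^ 2 + 2 * α * β + β ^ 2 < 1 ∧
      (∫ ω, z₀ ω ^ 4 ∂μ) =
        3 * (w ^ 2 + 2 * w * (α + β)) / (1 - 3 * α ^ 2 - 2 * α * β - β ^ 2) := by
  subst hz₀
  have hε : HasLaw ε₀ (gaussianReal 0 1) μ :=
    ⟨.of_map_ne_zero (hε₀law ▸ IsProbabilityMeasure.ne_zero _), hε₀law⟩
  have hσsq : MemLp (fun ω => σ₀ ω ^ 2) 2 μ :=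
    (memLp_two_iff_integrable_sq (Integrable.of_integral_ne_zero (by simp [hvar])).1).2
      (by simpa only [← pow_mul] using hmom4)
  set S := ∫ ω, σ₀ ω ^ 4 ∂μ
  have hS : S = w ^ 2 + 2 * w * (α + β) + (3 * α ^ 2 + 2 * α * β + β ^ 2) * S := calc
    S = ∫ ω, (σ₁ ω ^ 2) ^ 2 ∂μ := by
      simp only [← pow_mul]
      exact ((hstat.comp (measurable_snd.pow_const 4)).integral_eq).symm
    _ = _ := by
      simp_rw [hσ₁]
      rw [integral_garch_variance_sq hε hindep₀ hσsq, hvar, mul_one]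
  have hz4 : ∫ ω, (σ₀ ω * ε₀ ω) ^ 4 ∂μ = 3 * S := by
    simpa using hε.integral_mul_even_pow_gaussianReal hindep₀ 2 hmom4.1
  have hK : 0 < w ^ 2 + 2 * w * (α + β) := by positivity
  have hS0 : 0 ≤ S := integral_nonneg fun ω => by positivity
  have hc : 3 * α ^ 2 + 2 * α * β + β ^ 2 < 1 := by nlinarith
  refine ⟨hc, ?_⟩
  rw [hz4, eq_div_iff (by linarith)]
  linear_combination 3 * hS

/-- Stationary fourth moment of a GARCH(1,1) process with Gaussian innovations:
under stationarity, unit variance and finite fourth moment of the volatility, one has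
`3α² + 2αβ + β² < 1` and `E[z₀⁴] = 3(ω² + 2ω(α+β)) / (1 − 3α² − 2αβ − β²)`. -/
theorem garch_fourth_moment {Ω : Type*} [MeasurableSpace Ω]
    (μ : Measure Ω) [IsProbabilityMeasure μ]
    (w α β : ℝ) (hw : 0 < w) (hα : 0 ≤ α) (hβ : 0 ≤ β)
    (σ₀ ε₀ z₀ σ₁ ε₁ z₁ : Ω → ℝ)
    (hσ₀meas : Measurable σ₀) (hε₀meas : Measurable ε₀) (hσ₁meas : Measurable σ₁)
    (hε₁meas : Measurable ε₁)
    (hσ₀pos : ∀ ω, 0 ≤ σ₀ ω) (hσ₁pos : ∀ ω, 0 ≤ σ₁ ω)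
    (hε₀law : Measure.map ε₀ μ = gaussianReal 0 1)
    (hε₁law : Measure.map ε₁ μ = gaussianReal 0 1)
    (hindep₀ : IndepFun ε₀ σ₀ μ)
    (hz₀ : z₀ = fun ω => σ₀ ω * ε₀ ω)
    (hindep₁ : IndepFun ε₁ (fun ω => (σ₀ ω, z₀ ω)) μ)
    (hσ₁ : ∀ ω, σ₁ ω ^ 2 = w + α * z₀ ω ^ 2 + β * σ₀ ω ^ 2)
    (hz₁ : z₁ = fun ω => σ₁ ω * ε₁ ω)
    (hstat : IdentDistrib (fun ω => (z₁ ω, σ₁ ω)) (fun ω => (z₀ ω, σ₀ ω)) μ μ)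
    (hvar : (∫ ω, σ₀ ω ^ 2 ∂μ) = 1)
    (hmom4 : Integrable (fun ω => σ₀ ω ^ 4) μ) :
    3 * α ^ 2 + 2 * α * β + β ^ 2 < 1 ∧
      (∫ ω, z₀ ω ^ 4 ∂μ) =
        3 * (w ^ 2 + 2 * w * (α + β)) / (1 - 3 * α ^ 2 - 2 * α * β - β ^ 2) :=
  garch_fourth_moment_general μ w α β hw hα hβ σ₀ ε₀ z₀ σ₁ z₁ hε₀law hindep₀ hz₀ hσ₁ hstat hvar
    hmom4
end
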